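/- arXiv:1804.02669 — 3 statements merged into one kernel-verified Lean document; each statement's English description precedes it below -/
import Mathlib

section
/- Under Morita equivalence for a split quaternion algebra D = M_2(F): if h is a hermitian form on a right D-module V (i.e. h(w,v) = h(v,w)*), then the induced F-bilinear form h^♮ on V^♮ = Ve (where e = diag(1,0)) defined by h(xe,ye) = [[0,0],[h^♮(xe,ye),0]] is alternating (symplectic); and if h is skew-hermitian (h(w,v) = -h(v,w)*), then h^♮ is symmetric. -/
open Matrix MulOpposite

/-- Morita equivalence for the split quaternion algebra `D = M₂(F)` with main involution
given by the adjugate: if `h` is hermitian then the induced `F`-valued form `h^♮` on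
`V^♮ = Ve` (read off from the `(1,0)` entry of `h(xe, ye)`) is alternating, and if `h`
is skew-hermitian then `h^♮` is symmetric. -/
theorem stmt_1 {F : Type*} [Field F] [CharZero F]
    {V : Type*} [AddCommGroup V]
    [Module (Matrix (Fin 2) (Fin 2) F)ᵐᵒᵖ V]
    (h : V → V → Matrix (Fin 2) (Fin 2) F)
    (hadd1 : ∀ v v' w : V, h (v + v') w = h v w + h v' w)
    (hadd2 : ∀ v w w' : V, h v (w + w') = h v w + h v w')
    (hsesq : ∀ (a b : Matrix (Fin 2) (Fin 2) F) (v w : V),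
      h (op a • v) (op b • w) = a.adjugate * h v w * b) :
    (let e : Matrix (Fin 2) (Fin 2) F := !![1, 0; 0, 0]
     let hnat : V → V → F := fun x y => h (op e • x) (op e • y) 1 0
     -- the form `h(xe, ye)` has the claimed shape
     (∀ x y : V, h (op e • x) (op e • y) = !![0, 0; hnat x y, 0]) ∧
     -- hermitian ⟹ `h^♮` is alternating (symplectic)
     ((∀ v w : V, h w v = (h v w).adjugate) → ∀ x : V, hnat x x = 0) ∧
     -- skew-hermitian ⟹ `h^♮` is symmetric
     ((∀ v w : V, h w v = -(h v w).adjugate) → ∀ x y : V, hnat x y = hnat y x)) := by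

  intro e hnat
  have shape : ∀ x y : V, h (op e • x) (op e • y) = !![0, 0; hnat x y, 0] := by
    intro x y
    have := hsesq e e x y
    simp only [hnat, this]
    ext i j
    have he : e.adjugate = !![0,0;0,1] := by
      simp [e, Matrix.adjugate_fin_two]
    rw [he]
    fin_cases i <;> fin_cases j <;>
      simp [e, Matrix.mul_apply, Matrix.vecMul, dotProduct, Fin.sum_univ_two]
  refine ⟨shape, ?_, ?_⟩
  · intro herm x
    have h1 := shape x x
    have h2 := herm (op e • x) (op e • x)
    rw [h1] at h2
    have := congrFun (congrFun h2 1) 0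
    simp [Matrix.adjugate_fin_two] at this
    have h4 : hnat x x + hnat x x = 0 := by linear_combination this
    simpa [two_mul] using mul_eq_zero.mp (by linear_combination h4 : (2:F) * hnat x x = 0)
  · intro skew x y
    have h1 := shape x y
    have h2 := shape y x
    have h3 := skew (op e • x) (op e • y)
    rw [h1, h2] at h3
    have := congrFun (congrFun h3 1) 0
    simpa [Matrix.adjugate_fin_two] using this.symm
end

section
/- For every integer l ≥ 0 and every t > 0, the function P(t) := t^{1/2+l}·∫_ℝ exp(-2πt(y - i/t)²)·(iy-1)^{2l} dy equals ∫_ℝ exp(-2πy²)·(iy - (t^{-1/2} + t^{1/2}))^{2l} dy, and in particular P(t) = P(1/t). -/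
/-!
Up to the factor `(-1)^l`, the integrand of `P(t)` is `e^{-b z²} (z + c)^{2l}` with `b = 2πt`,
`c = i(1 + 1/t)`, taken along the horizontal line `z = y - i/t`. Integrals of `e^{-b z²} (z + c)ⁿ`
along horizontal lines do not depend on the line: integrating the derivative by parts gives, on
every line, the same three-term recurrence in `n`, and for `n = 0` this is the classical contour
shift of the Gaussian integral. On the real line the substitution `y ↦ y / √t` produces the stated
integral, which depends on `t` only through `t^{-1/2} + t^{1/2}`.
-/

open MeasureTheory Real

/-- `P(t) = t^{1/2+l} ∫_ℝ e^{-2πt(y - i/t)²} (iy - 1)^{2l} dy`. -/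
noncomputable def Pfun (l : ℕ) (t : ℝ) : ℂ :=
  (t : ℂ) ^ ((1 : ℂ) / 2 + l) *
    ∫ y : ℝ,
      Complex.exp (-2 * π * t * ((y : ℂ) - Complex.I / t) ^ 2) *
        (Complex.I * y - 1) ^ (2 * l)

theorem integral_cexp_neg_mul_sq_add {b : ℂ} (hb : 0 < b.re) (w : ℂ) :
    ∫ x : ℝ, Complex.exp (-b * (x + w) ^ 2) = ∫ x : ℝ, Complex.exp (-b * x ^ 2) := by
  have hw (x : ℝ) : (x : ℂ) + w = ((x + w.re : ℝ) : ℂ) + w.im * Complex.I := by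
    push_cast
    rw [add_assoc, Complex.re_add_im]
  simp_rw [hw]
  rw [integral_add_right_eq_self (fun x : ℝ ↦ Complex.exp (-b * (x + w.im * Complex.I) ^ 2)),
    GaussianFourier.integral_cexp_neg_mul_sq_add_real_mul_I hb, integral_gaussian_complex hb]

theorem integrable_abs_add_pow_mul_exp_neg_mul_sq {b : ℝ} (hb : 0 < b) (R : ℝ) (n : ℕ) :
    Integrable fun x : ℝ ↦ (|x| + R) ^ n * rexp (-b * x ^ 2) := by
  have hmoment (k : ℕ) : Integrable fun x : ℝ ↦ |x| ^ k * rexp (-b * x ^ 2) := by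
    refine (integrable_rpow_mul_exp_neg_mul_sq hb
      (neg_one_lt_zero.trans_le k.cast_nonneg)).abs.congr (.of_forall fun x ↦ ?_)
    dsimp only
    rw [abs_mul, Real.rpow_natCast, abs_pow, abs_of_pos (exp_pos _)]
  simp_rw [add_pow, Finset.sum_mul]
  refine integrable_finsetSum _ fun k _ ↦ ((hmoment k).mul_const (R ^ (n - k) * n.choose k)).congr
    (.of_forall fun x ↦ ?_)
  ring

noncomputable def gaussPoly (b : ℝ) (c : ℂ) (n : ℕ) (z : ℂ) : ℂ :=
  Complex.exp (-b * z ^ 2) * (z + c) ^ n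

section GaussPoly

variable (c : ℂ) (n : ℕ)

theorem norm_gaussPoly_add_le (b : ℝ) (w : ℂ) (x : ℝ) :
    ‖gaussPoly b c n (x + w)‖ ≤ rexp (b * w.im ^ 2) *
      ((|x + w.re| + ‖w.im * Complex.I + c‖) ^ n * rexp (-b * (x + w.re) ^ 2)) := by
  have hre : (-(b : ℂ) * (x + w) ^ 2).re = b * w.im ^ 2 + -b * (x + w.re) ^ 2 := by
    simp only [pow_two, Complex.mul_re, Complex.add_re, Complex.add_im, Complex.neg_re,
      Complex.neg_im, Complex.ofReal_re, Complex.ofReal_im, Complex.mul_im]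
    ring
  have hlin : ‖(x : ℂ) + w + c‖ ≤ |x + w.re| + ‖w.im * Complex.I + c‖ := by
    have hsplit : (x : ℂ) + w + c = ((x + w.re : ℝ) : ℂ) + (w.im * Complex.I + c) :=
      Complex.ext (by simp) (by simp)
    rw [hsplit, ← Real.norm_eq_abs, ← Complex.norm_real]
    exact norm_add_le _ _
  rw [gaussPoly, norm_mul, norm_pow, Complex.norm_exp, hre, exp_add, mul_assoc,
    mul_comm (rexp _) (‖_‖ ^ n)]
  gcongr

theorem integrable_gaussPoly_add {b : ℝ} (hb : 0 < b) (w : ℂ) :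
    Integrable fun x : ℝ ↦ gaussPoly b c n (x + w) := by
  have hbound := ((integrable_abs_add_pow_mul_exp_neg_mul_sq hb ‖w.im * Complex.I + c‖ n
    ).comp_add_right w.re).const_mul (rexp (b * w.im ^ 2))
  exact hbound.mono' (by unfold gaussPoly; fun_prop)
    (.of_forall (norm_gaussPoly_add_le c n b w))

-- At `n = 0` the truncated `n - 1` is harmless: its coefficient vanishes.
theorem hasDerivAt_gaussPoly (b : ℝ) (z : ℂ) :
    HasDerivAt (gaussPoly b c n) (-2 * b * gaussPoly b c (n + 1) z +
      2 * b * c * gaussPoly b c n z + n * gaussPoly b c (n - 1) z) z := by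
  have hexp : HasDerivAt (fun z ↦ Complex.exp (-b * z ^ 2))
      (Complex.exp (-b * z ^ 2) * (-b * (2 * z))) z := by
    simpa using ((hasDerivAt_pow 2 z).const_mul (-(b : ℂ))).cexp
  have hpow : HasDerivAt (fun z ↦ (z + c) ^ n) (n * (z + c) ^ (n - 1)) z := by
    simpa using ((hasDerivAt_id z).add_const c).fun_pow n
  refine (hexp.fun_mul hpow).congr_deriv ?_
  simp only [gaussPoly]
  ring

theorem integral_gaussPoly_add_recurrence {b : ℝ} (hb : 0 < b) (w : ℂ) :
    2 * b * ∫ x : ℝ, gaussPoly b c (n + 1) (x + w) =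
      2 * b * c * (∫ x : ℝ, gaussPoly b c n (x + w)) +
        n * ∫ x : ℝ, gaussPoly b c (n - 1) (x + w) := by
  have hint (k : ℕ) (a : ℂ) : Integrable fun x : ℝ ↦ a * gaussPoly b c k (x + w) :=
    (integrable_gaussPoly_add c k hb w).const_mul a
  have hderiv (x : ℝ) : HasDerivAt (fun x : ℝ ↦ gaussPoly b c n (x + w))
      (-2 * b * gaussPoly b c (n + 1) (x + w) + 2 * b * c * gaussPoly b c n (x + w) +
        n * gaussPoly b c (n - 1) (x + w)) x :=
    ((hasDerivAt_gaussPoly c n b (x + w)).comp_add_const (x : ℂ) w).comp_ofReal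
  have hzero := integral_eq_zero_of_hasDerivAt_of_integrable hderiv
    (((hint _ _).fun_add (hint _ _)).fun_add (hint _ _)) (integrable_gaussPoly_add c n hb w)
  rw [integral_add ((hint _ _).fun_add (hint _ _)) (hint _ _), integral_add (hint _ _) (hint _ _),
    integral_const_mul, integral_const_mul, integral_const_mul] at hzero
  linear_combination -hzero

theorem integral_gaussPoly_add {b : ℝ} (hb : 0 < b) (w : ℂ) :
    ∫ x : ℝ, gaussPoly b c n (x + w) = ∫ x : ℝ, gaussPoly b c n x := by
  induction n using Nat.strong_induction_on with
  | _ n ih =>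
    rcases n with _ | m
    · simpa only [gaussPoly, pow_zero, mul_one] using
        integral_cexp_neg_mul_sq_add (b := b) (by simpa using hb) w
    · have hshifted := integral_gaussPoly_add_recurrence c m hb w
      have hreal := integral_gaussPoly_add_recurrence c m hb 0
      simp only [add_zero] at hreal
      rw [ih m (by omega), ih (m - 1) (by omega), ← hreal] at hshifted
      have hb' : 2 * (b : ℂ) ≠ 0 := by exact_mod_cast (mul_pos two_pos hb).ne'
      exact mul_left_cancel₀ hb' hshifted

theorem gaussPoly_inv_mul {a : ℝ} (ha : a ≠ 0) (b : ℝ) (z : ℂ) :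
    gaussPoly b c n ((a : ℂ)⁻¹ * z) = (a : ℂ)⁻¹ ^ n * gaussPoly (b / a ^ 2) (a * c) n z := by
  have ha' : (a : ℂ) ≠ 0 := by exact_mod_cast ha
  simp only [gaussPoly]
  push_cast
  rw [mul_left_comm, ← mul_pow]
  congr 2 <;> field_simp

theorem integral_gaussPoly_rescale {a : ℝ} (ha : 0 < a) (b : ℝ) :
    ∫ x : ℝ, gaussPoly b c n x =
      (a : ℂ)⁻¹ ^ (n + 1) * ∫ x : ℝ, gaussPoly (b / a ^ 2) (a * c) n x := by
  have hscale := Measure.integral_comp_inv_mul_left (fun x : ℝ ↦ gaussPoly b c n x) a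
  rw [abs_of_pos ha] at hscale
  push_cast at hscale
  simp_rw [gaussPoly_inv_mul c n ha.ne', integral_const_mul] at hscale
  have ha' : (a : ℂ) ≠ 0 := by exact_mod_cast ha.ne'
  rw [Complex.real_smul] at hscale
  rw [pow_succ', mul_assoc, hscale]
  field_simp

end GaussPoly

theorem I_mul_sub_pow_two_mul (z s : ℂ) (l : ℕ) :
    (Complex.I * z - s) ^ (2 * l) = (-1) ^ l * (z + Complex.I * s) ^ (2 * l) := by
  rw [pow_mul, pow_mul, ← mul_pow]
  congr 1
  linear_combination (z ^ 2 + s ^ 2) * Complex.I_sq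

theorem ofReal_sq_cpow_half_add_natCast {a : ℝ} (ha : 0 < a) (l : ℕ) :
    ((a ^ 2 : ℝ) : ℂ) ^ ((1 : ℂ) / 2 + l) = (a : ℂ) ^ (2 * l + 1) := by
  have hexp : (1 : ℂ) / 2 + l = ((1 / 2 + l : ℝ) : ℂ) := by push_cast; ring
  rw [hexp, ← Complex.ofReal_cpow (by positivity), Real.rpow_add (by positivity),
    ← Real.sqrt_eq_rpow, Real.sqrt_sq ha.le, Real.rpow_natCast]
  push_cast
  ring

theorem Pfun_eq_integral (l : ℕ) {t : ℝ} (ht : 0 < t) :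
    Pfun l t = ∫ y : ℝ, Complex.exp (-2 * π * y ^ 2) *
      (Complex.I * y - (((√t)⁻¹ : ℝ) + (√t : ℝ))) ^ (2 * l) := by
  obtain ⟨a, ha, rfl⟩ : ∃ a, 0 < a ∧ a ^ 2 = t := ⟨√t, sqrt_pos.2 ht, sq_sqrt ht.le⟩
  have ha' : (a : ℂ) ≠ 0 := by exact_mod_cast ha.ne'
  have hintegrand (y : ℝ) :
      Complex.exp (-2 * π * ((a ^ 2 : ℝ) : ℂ) * (y - Complex.I / (a ^ 2 : ℝ)) ^ 2) *
        (Complex.I * y - 1) ^ (2 * l) = (-1) ^ l *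
          gaussPoly (2 * π * a ^ 2) (Complex.I * (1 + 1 / a ^ 2)) (2 * l)
            (y + -(Complex.I / a ^ 2)) := by
    rw [I_mul_sub_pow_two_mul, gaussPoly]
    push_cast
    ring_nf
  have htarget (y : ℝ) : Complex.exp (-2 * π * y ^ 2) *
      (Complex.I * y - ((a⁻¹ : ℝ) + (a : ℝ))) ^ (2 * l) =
        (-1) ^ l * gaussPoly (2 * π) (Complex.I * (a⁻¹ + a)) (2 * l) y := by
    rw [I_mul_sub_pow_two_mul, gaussPoly]
    push_cast
    ring_nf
  have hparams : gaussPoly (2 * π * a ^ 2 / a ^ 2) (a * (Complex.I * (1 + 1 / a ^ 2))) (2 * l) =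
      gaussPoly (2 * π) (Complex.I * (a⁻¹ + a)) (2 * l) := by
    congr 1
    · field_simp
    · push_cast
      field_simp
      ring
  rw [sqrt_sq ha.le, Pfun]
  simp_rw [hintegrand, htarget, integral_const_mul]
  rw [integral_gaussPoly_add _ _ (by positivity), integral_gaussPoly_rescale _ _ ha, hparams,
    ofReal_sq_cpow_half_add_natCast ha, mul_left_comm, ← mul_assoc ((a : ℂ) ^ _), ← mul_pow,
    mul_inv_cancel₀ ha', one_pow, one_mul]

/-- For every integer `l ≥ 0` and `t > 0`,
`P(t) = ∫_ℝ e^{-2πy²} (iy - (t^{-1/2} + t^{1/2}))^{2l} dy`, and in particular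
`P(t) = P(1/t)`. -/
theorem stmt_7 (l : ℕ) (t : ℝ) (ht : 0 < t) :
    Pfun l t = (∫ y : ℝ,
        Complex.exp (-2 * π * y ^ 2) *
          (Complex.I * y - (((Real.sqrt t)⁻¹ : ℝ) + (Real.sqrt t : ℝ))) ^ (2 * l)) ∧
    Pfun l t = Pfun l (1 / t) := by
  refine ⟨Pfun_eq_integral l ht, ?_⟩
  rw [Pfun_eq_integral l ht, Pfun_eq_integral l (one_div_pos.2 ht), one_div, sqrt_inv, inv_inv,
    add_comm ((√t : ℝ) : ℂ)]
end

section
/- Let Ξ(X) and D(X) be polynomials over ℂ with D(0) ≠ 0, q > 1 a real number, and suppose Ξ(q^{-s})·D(q^{s}) = Ξ(q^{s})·D(q^{-s}) holds for all s ∈ ℂ. If additionally Ξ(0) = c·D(0) for some constant c, and for sufficiently large m the polynomial X^m·D(1/X) (made into a polynomial) is coprime to D(X), then Ξ(X) = c·D(X). -/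
/-!
Multiplying `Ξ(1/x) D(x) = Ξ(x) D(1/x)` by `x ^ N` turns it into the polynomial identity
`reflect N Ξ * D = Ξ * reflect N D`, valid on the infinite set `{q ^ n}` and hence everywhere.
As `reflect N D = X ^ (N - deg D) * reverse D` is coprime to `D`, this gives `D ∣ Ξ`; comparing
degrees (using `D(0) ≠ 0`) gives `deg Ξ ≤ deg D`, so `Ξ` is a constant multiple of `D`, and the
constant is read off at `X = 0`.
-/

open Polynomial

namespace Polynomial

theorem reflect_eq_X_pow_mul_reverse {R : Type*} [Semiring R] {f : R[X]} {N : ℕ}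
    (hf : f.natDegree ≤ N) : reflect N f = X ^ (N - f.natDegree) * f.reverse := by
  have h := reflect_mul (1 : R[X]) f (F := N - f.natDegree) (by simp) le_rfl
  rwa [one_mul, Nat.sub_add_cancel hf, reflect_one] at h

theorem natDegree_reflect {R : Type*} [Semiring R] [Nontrivial R] {f : R[X]} {N : ℕ}
    (hf0 : f ≠ 0) (hf : f.natDegree ≤ N) : (reflect N f).natDegree = N - f.natTrailingDegree := by
  rw [reflect_eq_X_pow_mul_reverse hf, natDegree_X_pow_mul _ (by rwa [ne_eq, reverse_eq_zero]),
    reverse_natDegree]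
  have := natTrailingDegree_le_natDegree (p := f)
  omega

theorem eval_reflect {K : Type*} [Field K] {f : K[X]} {N : ℕ} (hf : f.natDegree ≤ N) {x : K}
    (hx : x ≠ 0) : (reflect N f).eval x = x ^ N * f.eval x⁻¹ := by
  let _ : Invertible x⁻¹ := invertibleOfNonzero (inv_ne_zero hx)
  have h := eval₂_reflect_mul_pow (RingHom.id K) x⁻¹ N f hf
  rw [invOf_eq_inv, inv_inv, ← eval, ← eval] at h
  rw [← h, inv_pow, mul_left_comm, mul_inv_cancel₀ (pow_ne_zero N hx), mul_one]

theorem reflect_mul_eq_mul_reflect_of_eval_inv {K : Type*} [Field K] {f g : K[X]} {N : ℕ}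
    (hf : f.natDegree ≤ N) (hg : g.natDegree ≤ N) {S : Set K} (hS : S.Infinite)
    (hfg : ∀ x ∈ S, x ≠ 0 → f.eval x⁻¹ * g.eval x = f.eval x * g.eval x⁻¹) :
    reflect N f * g = f * reflect N g := by
  refine eq_of_infinite_eval_eq _ _ ((hS.sdiff (Set.finite_singleton 0)).mono ?_)
  rintro x ⟨hxS, hx⟩
  have hx : x ≠ 0 := hx
  simp only [Set.mem_ofPred_eq, eval_mul, eval_reflect hf hx, eval_reflect hg hx]
  linear_combination x ^ N * hfg x hxS hx

theorem natDegree_le_of_reflect_mul_eq_mul_reflect {R : Type*} [Semiring R] [NoZeroDivisors R]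
    {f g : R[X]} {N : ℕ} (hf : f.natDegree ≤ N) (hg : g.natDegree ≤ N) (hg0 : g.coeff 0 ≠ 0)
    (h : reflect N f * g = f * reflect N g) : f.natDegree ≤ g.natDegree := by
  rcases eq_or_ne f 0 with rfl | hf0
  · simp
  have hgne : g ≠ 0 := fun hg => hg0 (by simp [hg])
  have : Nontrivial R := nontrivial_of_ne _ _ hg0
  have hgt : g.natTrailingDegree = 0 := natTrailingDegree_eq_zero.mpr (Or.inr hg0)
  have hdeg := congrArg natDegree h
  rw [natDegree_mul ((reflect_eq_zero_iff).not.mpr hf0) hgne,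
    natDegree_mul hf0 ((reflect_eq_zero_iff).not.mpr hgne), natDegree_reflect hf0 hf,
    natDegree_reflect hgne hg, hgt] at hdeg
  omega

theorem exists_eq_C_mul_of_dvd_of_natDegree_le {R : Type*} [CommRing R] [IsDomain R]
    {p q : R[X]} (hp : p ≠ 0) (hdvd : p ∣ q) (hdeg : q.natDegree ≤ p.natDegree) :
    ∃ e, q = C e * p := by
  obtain ⟨r, rfl⟩ := hdvd
  rcases eq_or_ne r 0 with rfl | hr
  · exact ⟨0, by simp⟩
  rw [natDegree_mul hp hr] at hdeg
  exact ⟨r.coeff 0, by rw [← eq_C_of_natDegree_eq_zero (by omega), mul_comm]⟩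

end Polynomial

theorem Complex.injective_ofReal_pow {q : ℝ} (hq0 : 0 < q) (hq1 : q ≠ 1) :
    Function.Injective fun n : ℕ => (q : ℂ) ^ n := by
  intro m n h
  exact pow_right_injective₀ hq0 hq1 (Complex.ofReal_injective (by simpa using h))

/-- The divisibility argument of §8.2: if `Ξ(q^{-s})·D(q^s) = Ξ(q^s)·D(q^{-s})` for all
`s ∈ ℂ`, `D(0) ≠ 0`, `Ξ(0) = c·D(0)`, and for all sufficiently large `m` the polynomial
`X^m·D(1/X)` (i.e. `X^{m - deg D}·reverse(D)`) is coprime to `D`, then `Ξ = c·D`. -/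
theorem stmt_14 (Ξ D : Polynomial ℂ) (q : ℝ) (hq : 1 < q) (c : ℂ)
    (hD0 : D.eval 0 ≠ 0)
    (hfe : ∀ s : ℂ, Ξ.eval ((q : ℂ) ^ (-s)) * D.eval ((q : ℂ) ^ s) =
        Ξ.eval ((q : ℂ) ^ s) * D.eval ((q : ℂ) ^ (-s)))
    (hc : Ξ.eval 0 = c * D.eval 0)
    (hcop : ∃ M : ℕ, ∀ m : ℕ, M ≤ m →
      IsCoprime ((Polynomial.X : Polynomial ℂ) ^ (m - D.natDegree) * D.reverse) D) :
    Ξ = Polynomial.C c * D := by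
  obtain ⟨M, hM⟩ := hcop
  set N := M + Ξ.natDegree + D.natDegree
  have hΞN : Ξ.natDegree ≤ N := by omega
  have hDN : D.natDegree ≤ N := by omega
  have hDcoeff : D.coeff 0 ≠ 0 := by rwa [coeff_zero_eq_eval_zero]
  have hrefl : reflect N Ξ * D = Ξ * reflect N D := by
    refine reflect_mul_eq_mul_reflect_of_eval_inv hΞN hDN
      (Set.infinite_range_of_injective (Complex.injective_ofReal_pow (by linarith) hq.ne')) ?_
    rintro _ ⟨n, rfl⟩ -
    simpa [Complex.cpow_neg] using hfe n
  have hdvd : D ∣ Ξ := by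
    refine (reflect_eq_X_pow_mul_reverse hDN ▸ hM N (by omega)).symm.dvd_of_dvd_mul_right ?_
    exact ⟨reflect N Ξ, by rw [← hrefl, mul_comm]⟩
  obtain ⟨e, rfl⟩ := exists_eq_C_mul_of_dvd_of_natDegree_le (fun h => hD0 (by simp [h])) hdvd
    (natDegree_le_of_reflect_mul_eq_mul_reflect hΞN hDN hDcoeff hrefl)
  rw [eval_mul, eval_C] at hc
  rw [mul_right_cancel₀ hD0 hc]
end
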